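/- arXiv:1804.00308 — 7 statements merged into one kernel-verified Lean document; each statement's English description precedes it below -/
import Mathlib

section
/- (Theorem 1: termination of the TRIM algorithm) Suppose (I_i)_{i≥0} is a sequence of index subsets of {1,…,N}, each of size n, and (θ_i)_{i≥0} is a sequence of parameters in ℝ^d × ℝ such that: for every i ≥ 0, L(I_i, θ_i) ≤ L(I_i, θ) for all θ (θ_i minimizes the loss on I_i), and for every i ≥ 1, L(I_i, θ_{i−1}) ≤ L(J, θ_{i−1}) for every size-n subset J (I_i is a size-n subset minimizing the loss under θ_{i−1}). Let R_i = L(I_i, θ_i). Then there exists an index i with 1 ≤ i ≤ C(N,n) (the binomial coefficient) such that R_{i+1} = R_i; in particular the TRIM algorithm terminates in a finite number of iterations. -/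
/-- The trimmed regularized loss `L(I, θ) = (1/n) Σ_{j∈I} (⟨w, x_j⟩ + b − y_j)² + λ Ω(w)`. -/
noncomputable def trimLoss {d N : ℕ} (n : ℕ) (x : Fin N → Fin d → ℝ) (y : Fin N → ℝ)
    (Ω : (Fin d → ℝ) → ℝ) (lam : ℝ) (I : Finset (Fin N)) (θ : (Fin d → ℝ) × ℝ) : ℝ :=
  (1 / (n : ℝ)) * ∑ j ∈ I, ((∑ i, θ.1 i * x j i) + θ.2 - y j) ^ 2 + lam * Ω θ.1

/-!
Each step of TRIM is one half of an alternating minimization, so the loss values `R i` never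
increase. Moreover `R i = min_θ L(I i, θ)` depends only on the subset `I i`. If the values
strictly decreased on `1, …, C(N, n) + 1`, these `C(N, n) + 1` iterates would carry pairwise
distinct subsets of size `n`, of which there are only `C(N, n)`.
-/

open Finset

theorem Antitone.exists_apply_succ_eq_of_mapsTo {α β : Type*} [PartialOrder β] {R : ℕ → β}
    (hR : Antitone R) {I : ℕ → α} {s : Finset α} (hI : ∀ i, I i ∈ s)
    (hRI : ∀ i j, I i = I j → R i = R j) (m : ℕ) :
    ∃ i ∈ Ico m (m + #s), R (i + 1) = R i := by
  by_contra! hne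
  have hstrict : StrictAntiOn R (Set.Icc m (m + #s)) :=
    strictAntiOn_of_add_one_lt Set.ordConnected_Icc fun i _ hi hi' =>
      (hR i.le_succ).lt_of_ne <| hne i <| mem_Ico.2 ⟨hi.1, hi'.2⟩
  have hinj : Set.InjOn I (Icc m (m + #s) : Set ℕ) := by
    rw [coe_Icc]
    exact fun i hi j hj hij => hstrict.injOn hi hj (hRI i j hij)
  have hcard := card_le_card_of_injOn I (fun i _ => hI i) hinj
  simp only [Nat.card_Icc] at hcard
  omega

section AlternatingMinimization

variable {α β γ : Type*} [PartialOrder γ] {L : Finset α → β → γ} {n : ℕ}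
  {I : ℕ → Finset α} {θ : ℕ → β}

theorem alternatingMin_value_eq_of_eq (hmin : ∀ i θ', L (I i) (θ i) ≤ L (I i) θ')
    {i j : ℕ} (hij : I i = I j) : L (I i) (θ i) = L (I j) (θ j) :=
  le_antisymm (hij ▸ hmin i (θ j)) (hij ▸ hmin j (θ i))

theorem alternatingMin_antitone (hcard : ∀ i, #(I i) = n)
    (hmin : ∀ i θ', L (I i) (θ i) ≤ L (I i) θ')
    (hsel : ∀ i, 1 ≤ i → ∀ J : Finset α, #J = n → L (I i) (θ (i - 1)) ≤ L J (θ (i - 1))) :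
    Antitone fun i => L (I i) (θ i) :=
  antitone_nat_of_succ_le fun i =>
    (hmin (i + 1) (θ i)).trans (hsel (i + 1) (Nat.le_add_left 1 i) (I i) (hcard i))

end AlternatingMinimization

theorem trim_terminates_general (d n N : ℕ)
    (x : Fin N → Fin d → ℝ) (y : Fin N → ℝ)
    (Ω : (Fin d → ℝ) → ℝ) (lam : ℝ)
    (I : ℕ → Finset (Fin N)) (θ : ℕ → (Fin d → ℝ) × ℝ)
    (hcard : ∀ i, (I i).card = n)
    (hmin : ∀ (i : ℕ) (θ' : (Fin d → ℝ) × ℝ),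
      trimLoss n x y Ω lam (I i) (θ i) ≤ trimLoss n x y Ω lam (I i) θ')
    (hsel : ∀ i : ℕ, 1 ≤ i → ∀ J : Finset (Fin N), J.card = n →
      trimLoss n x y Ω lam (I i) (θ (i - 1)) ≤ trimLoss n x y Ω lam J (θ (i - 1))) :
    ∃ i : ℕ, 1 ≤ i ∧ i ≤ Nat.choose N n ∧
      trimLoss n x y Ω lam (I (i + 1)) (θ (i + 1)) = trimLoss n x y Ω lam (I i) (θ i) := by
  have hI : ∀ i, I i ∈ (univ : Finset (Fin N)).powersetCard n := fun i =>
    mem_powersetCard.2 ⟨subset_univ _, hcard i⟩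
  obtain ⟨i, hi, hstep⟩ := (alternatingMin_antitone hcard hmin hsel).exists_apply_succ_eq_of_mapsTo
    hI (fun _ _ => alternatingMin_value_eq_of_eq hmin) 1
  rw [card_powersetCard, card_univ, Fintype.card_fin, mem_Ico] at hi
  exact ⟨i, hi.1, by omega, hstep⟩

/-- Theorem 1 (termination of TRIM): along the TRIM iterates, the loss value repeats
within the first `C(N, n)` steps, hence the algorithm terminates. -/
theorem trim_terminates (d n N : ℕ) (hn : 0 < n) (hnN : n ≤ N)
    (x : Fin N → Fin d → ℝ) (y : Fin N → ℝ)
    (Ω : (Fin d → ℝ) → ℝ) (lam : ℝ) (hlam : 0 ≤ lam)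
    (I : ℕ → Finset (Fin N)) (θ : ℕ → (Fin d → ℝ) × ℝ)
    (hcard : ∀ i, (I i).card = n)
    (hmin : ∀ (i : ℕ) (θ' : (Fin d → ℝ) × ℝ),
      trimLoss n x y Ω lam (I i) (θ i) ≤ trimLoss n x y Ω lam (I i) θ')
    (hsel : ∀ i : ℕ, 1 ≤ i → ∀ J : Finset (Fin N), J.card = n →
      trimLoss n x y Ω lam (I i) (θ (i - 1)) ≤ trimLoss n x y Ω lam J (θ (i - 1))) :
    ∃ i : ℕ, 1 ≤ i ∧ i ≤ Nat.choose N n ∧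
      trimLoss n x y Ω lam (I (i + 1)) (θ (i + 1)) = trimLoss n x y Ω lam (I i) (θ i) :=
  trim_terminates_general d n N x y Ω lam I θ hcard hmin hsel
end

section
/- (Theorem 2: estimation bound for the global trimmed optimum) Let (θ̂, Î) be a global minimizer of the trimmed objective, i.e. Î ⊆ {1,…,N} has size n and L(Î, θ̂) ≤ L(I, θ) for every size-n subset I and every θ. Let θ* satisfy L(P, θ*) ≤ L(P, θ) for all θ, where P = {1,…,n} is the set of pristine indices (θ* is the estimator trained on pristine data). Then there exists a subset I' ⊆ P of pristine indices with |I'| = n − p such that MSE(I', θ̂) ≤ (1 + α/(1−α)) · L(P, θ*), where α = p/n (equivalently, MSE(I', θ̂) ≤ (n/(n−p)) · L(P, θ*)). -/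
/-- `MSE(I, θ) = (1/|I|) Σ_{j∈I} (⟨w, x_j⟩ + b − y_j)²`. -/
noncomputable def trimMSE {d N : ℕ} (x : Fin N → Fin d → ℝ) (y : Fin N → ℝ)
    (I : Finset (Fin N)) (θ : (Fin d → ℝ) × ℝ) : ℝ :=
  (1 / (I.card : ℝ)) * ∑ j ∈ I, ((∑ i, θ.1 i * x j i) + θ.2 - y j) ^ 2

/-! Since `Î` has `n` of the `n + p` points, at least `n − p` of them are pristine. The squared
residuals of `θ̂` on those points are bounded by its total squared residual on `Î`, which is at
most `n · L(Î, θ̂)` because the regularizer is nonnegative, and `L(Î, θ̂) ≤ L(P, θ*)` because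
`(P, θ*)` is a competitor in the trimmed problem. Dividing by `n − p` gives the bound. -/

open Finset

theorem Finset.card_add_card_sub_card_univ_le_card_inter {α : Type*} [Fintype α] [DecidableEq α]
    (s t : Finset α) : #s + #t - Fintype.card α ≤ #(s ∩ t) := by
  have := card_le_univ (s ∪ t)
  have := card_union_add_card_inter s t
  omega

section Residuals

variable {d N : ℕ} (x : Fin N → Fin d → ℝ) (y : Fin N → ℝ)

noncomputable def sqResidualSum (I : Finset (Fin N)) (θ : (Fin d → ℝ) × ℝ) : ℝ :=
  ∑ j ∈ I, ((∑ i, θ.1 i * x j i) + θ.2 - y j) ^ 2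

theorem sqResidualSum_mono {I J : Finset (Fin N)} (hIJ : I ⊆ J) (θ : (Fin d → ℝ) × ℝ) :
    sqResidualSum x y I θ ≤ sqResidualSum x y J θ :=
  sum_le_sum_of_subset_of_nonneg hIJ fun _ _ _ => sq_nonneg _

theorem trimMSE_eq_div (I : Finset (Fin N)) (θ : (Fin d → ℝ) × ℝ) :
    trimMSE x y I θ = sqResidualSum x y I θ / #I :=
  one_div_mul_eq_div _ _

theorem sqResidualSum_le_mul_trimLoss {n : ℕ} (hn : 0 < n) {Ω : (Fin d → ℝ) → ℝ} {lam : ℝ}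
    (I : Finset (Fin N)) {θ : (Fin d → ℝ) × ℝ} (hreg : 0 ≤ lam * Ω θ.1) :
    sqResidualSum x y I θ ≤ n * trimLoss n x y Ω lam I θ := by
  have hn' : (0 : ℝ) < n := by exact_mod_cast hn
  rw [trimLoss, mul_add, ← mul_assoc, mul_one_div_cancel hn'.ne', one_mul]
  exact le_add_of_nonneg_right (mul_nonneg hn'.le hreg)

end Residuals

theorem trim_estimation_bound_general (d n p : ℕ) (hpn : p < n)
    (x : Fin (n + p) → Fin d → ℝ) (y : Fin (n + p) → ℝ)
    (Ω : (Fin d → ℝ) → ℝ) (hΩ : ∀ w, 0 ≤ Ω w) (lam : ℝ) (hlam : 0 ≤ lam)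
    (P : Finset (Fin (n + p))) (hP : P = Finset.univ.filter fun j : Fin (n + p) => (j : ℕ) < n)
    (θhat : (Fin d → ℝ) × ℝ) (Ihat : Finset (Fin (n + p))) (hIhat : Ihat.card = n)
    (hglobal : ∀ (I : Finset (Fin (n + p))) (θ : (Fin d → ℝ) × ℝ), I.card = n →
      trimLoss n x y Ω lam Ihat θhat ≤ trimLoss n x y Ω lam I θ)
    (θstar : (Fin d → ℝ) × ℝ) :
    ∃ I' ⊆ P, I'.card = n - p ∧
      trimMSE x y I' θhat ≤ ((n : ℝ) / ((n : ℝ) - (p : ℝ))) * trimLoss n x y Ω lam P θstar := by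
  have hPcard : #P = n := by rw [hP, Fin.card_filter_val_lt]; omega
  have hpristine : n - p ≤ #(Ihat ∩ P) := by
    have := card_add_card_sub_card_univ_le_card_inter Ihat P
    rw [Fintype.card_fin, hIhat, hPcard] at this
    omega
  obtain ⟨I', hI', hI'card⟩ := exists_subset_card_eq hpristine
  refine ⟨I', hI'.trans inter_subset_right, hI'card, ?_⟩
  have hres : sqResidualSum x y I' θhat ≤ n * trimLoss n x y Ω lam P θstar :=
    calc sqResidualSum x y I' θhat
        ≤ sqResidualSum x y Ihat θhat := sqResidualSum_mono x y (hI'.trans inter_subset_left) _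
      _ ≤ n * trimLoss n x y Ω lam Ihat θhat :=
          sqResidualSum_le_mul_trimLoss x y ((Nat.zero_le p).trans_lt hpn) Ihat
            (mul_nonneg hlam (hΩ _))
      _ ≤ n * trimLoss n x y Ω lam P θstar := by gcongr; exact hglobal P θstar hPcard
  have hnp : (0 : ℝ) < n - p := sub_pos.mpr (by exact_mod_cast hpn)
  rw [trimMSE_eq_div, hI'card, Nat.cast_sub hpn.le, div_mul_eq_mul_div]
  exact div_le_div_of_nonneg_right hres hnp.le

/-- Theorem 2 (estimation bound for the global trimmed optimum): there is a subset `I'`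
of `n − p` pristine points with `MSE(I', θ̂) ≤ (n/(n−p)) · L(P, θ*) = (1 + α/(1−α)) · L(P, θ*)`. -/
theorem trim_estimation_bound (d n p : ℕ) (hp : 0 < p) (hpn : p < n)
    (x : Fin (n + p) → Fin d → ℝ) (y : Fin (n + p) → ℝ)
    (Ω : (Fin d → ℝ) → ℝ) (hΩ : ∀ w, 0 ≤ Ω w) (lam : ℝ) (hlam : 0 ≤ lam)
    (P : Finset (Fin (n + p))) (hP : P = Finset.univ.filter fun j : Fin (n + p) => (j : ℕ) < n)
    (θhat : (Fin d → ℝ) × ℝ) (Ihat : Finset (Fin (n + p))) (hIhat : Ihat.card = n)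
    (hglobal : ∀ (I : Finset (Fin (n + p))) (θ : (Fin d → ℝ) × ℝ), I.card = n →
      trimLoss n x y Ω lam Ihat θhat ≤ trimLoss n x y Ω lam I θ)
    (θstar : (Fin d → ℝ) × ℝ)
    (hstar : ∀ θ : (Fin d → ℝ) × ℝ,
      trimLoss n x y Ω lam P θstar ≤ trimLoss n x y Ω lam P θ) :
    ∃ I' ⊆ P, I'.card = n - p ∧
      trimMSE x y I' θhat ≤ ((n : ℝ) / ((n : ℝ) - (p : ℝ))) * trimLoss n x y Ω lam P θstar :=
  trim_estimation_bound_general d n p hpn x y Ω hΩ lam hlam P hP θhat Ihat hIhat hglobal θstar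
end

section
/- (Corollary of Theorem 2 for OLS with small poisoning rate) Suppose λ = 0 (ordinary least squares, so L(I,θ) = (1/n)·Σ_{j∈I}(f(x_j,θ)−y_j)²). Let (θ̂, Î) be a global minimizer of the trimmed objective (Î of size n, L(Î,θ̂) ≤ L(I,θ) for all size-n subsets I and all θ), and let θ* minimize L(P,·) where P = {1,…,n} are the pristine indices. If additionally p ≤ n/5 (poisoning ratio α = p/n ≤ 0.2), then there exists a subset I' ⊆ P with |I'| = n − p such that MSE(I', θ̂) ≤ 1.25 · MSE(P, θ*). -/
/-! Taking `I = P` and `θ = θ*` in the global optimality of `(θ̂, Î)` shows that `θ̂` fits the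
`n` points of `Î` at least as well as `θ*` fits the pristine ones. At most `p` points of `Î` are
poisoned, so `n − p` of them are pristine, and restricting to these only lowers the squared error;
the loss of normalization from `n` to `n − p` is the factor `n / (n − p) ≤ 5/4`. -/

section SquaredError

variable {d N : ℕ} (x : Fin N → Fin d → ℝ) (y : Fin N → ℝ)

noncomputable def sqError (I : Finset (Fin N)) (θ : (Fin d → ℝ) × ℝ) : ℝ :=
  ∑ j ∈ I, ((∑ i, θ.1 i * x j i) + θ.2 - y j) ^ 2

theorem sqError_nonneg (I : Finset (Fin N)) (θ : (Fin d → ℝ) × ℝ) : 0 ≤ sqError x y I θ :=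
  Finset.sum_nonneg fun _ _ => sq_nonneg _

theorem sqError_mono {I J : Finset (Fin N)} (hIJ : I ⊆ J) (θ : (Fin d → ℝ) × ℝ) :
    sqError x y I θ ≤ sqError x y J θ :=
  Finset.sum_le_sum_of_subset_of_nonneg hIJ fun _ _ _ => sq_nonneg _

theorem trimLoss_zero (n : ℕ) (Ω : (Fin d → ℝ) → ℝ) (I : Finset (Fin N))
    (θ : (Fin d → ℝ) × ℝ) : trimLoss n x y Ω 0 I θ = sqError x y I θ / n := by
  simp only [trimLoss, sqError, zero_mul, add_zero, one_div_mul_eq_div]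

theorem trimMSE_eq_sqError_div_card (I : Finset (Fin N)) (θ : (Fin d → ℝ) × ℝ) :
    trimMSE x y I θ = sqError x y I θ / I.card :=
  one_div_mul_eq_div _ _

theorem sqError_le_of_trimLoss_zero_le {n : ℕ} (hn : 0 < n) {Ω : (Fin d → ℝ) → ℝ}
    {I J : Finset (Fin N)} {θ θ' : (Fin d → ℝ) × ℝ}
    (h : trimLoss n x y Ω 0 I θ ≤ trimLoss n x y Ω 0 J θ') :
    sqError x y I θ ≤ sqError x y J θ' := by
  rw [trimLoss_zero, trimLoss_zero] at h
  exact (div_le_div_iff_of_pos_right (Nat.cast_pos.mpr hn)).mp h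

end SquaredError

theorem Finset.exists_subset_inter_card_eq {α : Type*} [Fintype α] [DecidableEq α]
    (s t : Finset α) : ∃ u ⊆ s ∩ t, u.card = s.card + t.card - Fintype.card α := by
  refine Finset.exists_subset_card_eq ?_
  have := Finset.card_union_add_card_inter s t
  have := (s ∪ t).card_le_univ
  omega

theorem div_le_mul_div_of_le_mul {a s c m n : ℝ} (has : a ≤ s) (hs : 0 ≤ s) (hm : 0 < m)
    (hn : 0 < n) (hnm : n ≤ c * m) : a / m ≤ c * (s / n) :=
  calc a / m ≤ s / m := div_le_div_of_nonneg_right has hm.le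
    _ = s / n * (n / m) := by field_simp
    _ ≤ s / n * c := by gcongr; exact (div_le_iff₀ hm).mpr hnm
    _ = c * (s / n) := mul_comm _ _

theorem trim_ols_small_poisoning_bound_general (d n p : ℕ) (hpn : p < n)
    (hrate : 5 * p ≤ n)
    (x : Fin (n + p) → Fin d → ℝ) (y : Fin (n + p) → ℝ)
    (Ω : (Fin d → ℝ) → ℝ) (lam : ℝ) (hlam : lam = 0)
    (P : Finset (Fin (n + p))) (hP : P = Finset.univ.filter fun j : Fin (n + p) => (j : ℕ) < n)
    (θhat : (Fin d → ℝ) × ℝ) (Ihat : Finset (Fin (n + p))) (hIhat : Ihat.card = n)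
    (hglobal : ∀ (I : Finset (Fin (n + p))) (θ : (Fin d → ℝ) × ℝ), I.card = n →
      trimLoss n x y Ω lam Ihat θhat ≤ trimLoss n x y Ω lam I θ)
    (θstar : (Fin d → ℝ) × ℝ) :
    ∃ I' ⊆ P, I'.card = n - p ∧
      trimMSE x y I' θhat ≤ 1.25 * trimMSE x y P θstar := by
  subst hlam
  have hPcard : P.card = n := by
    rw [hP, Fin.card_filter_val_lt]; omega
  obtain ⟨I', hI'sub, hI'card⟩ := Finset.exists_subset_inter_card_eq Ihat P
  rw [hIhat, hPcard, Fintype.card_fin, show n + n - (n + p) = n - p by omega] at hI'card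
  refine ⟨I', hI'sub.trans Finset.inter_subset_right, hI'card, ?_⟩
  have hfit := sqError_le_of_trimLoss_zero_le x y (by omega) (hglobal _ θstar hPcard)
  rw [trimMSE_eq_sqError_div_card, trimMSE_eq_sqError_div_card, hI'card, hPcard]
  refine div_le_mul_div_of_le_mul
    ((sqError_mono x y (hI'sub.trans Finset.inter_subset_left) θhat).trans hfit)
    (sqError_nonneg x y _ _) (by exact_mod_cast Nat.sub_pos_of_lt hpn)
    (by exact_mod_cast Nat.zero_lt_of_lt hpn) ?_
  rw [Nat.cast_sub hpn.le]
  have : (5 * p : ℝ) ≤ n := by exact_mod_cast hrate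
  linarith

/-- Corollary of Theorem 2 for OLS (`λ = 0`) with poisoning rate `α = p/n ≤ 0.2`:
there is a subset `I'` of `n − p` pristine points with `MSE(I', θ̂) ≤ 1.25 · MSE(P, θ*)`. -/
theorem trim_ols_small_poisoning_bound (d n p : ℕ) (hp : 0 < p) (hpn : p < n)
    (hrate : 5 * p ≤ n)
    (x : Fin (n + p) → Fin d → ℝ) (y : Fin (n + p) → ℝ)
    (Ω : (Fin d → ℝ) → ℝ) (hΩ : ∀ w, 0 ≤ Ω w) (lam : ℝ) (hlam : lam = 0)
    (P : Finset (Fin (n + p))) (hP : P = Finset.univ.filter fun j : Fin (n + p) => (j : ℕ) < n)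
    (θhat : (Fin d → ℝ) × ℝ) (Ihat : Finset (Fin (n + p))) (hIhat : Ihat.card = n)
    (hglobal : ∀ (I : Finset (Fin (n + p))) (θ : (Fin d → ℝ) × ℝ), I.card = n →
      trimLoss n x y Ω lam Ihat θhat ≤ trimLoss n x y Ω lam I θ)
    (θstar : (Fin d → ℝ) × ℝ)
    (hstar : ∀ θ : (Fin d → ℝ) × ℝ,
      trimLoss n x y Ω lam P θstar ≤ trimLoss n x y Ω lam P θ) :
    ∃ I' ⊆ P, I'.card = n - p ∧
      trimMSE x y I' θhat ≤ 1.25 * trimMSE x y P θstar :=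
  trim_ols_small_poisoning_bound_general d n p hpn hrate x y Ω lam hlam P hP θhat Ihat hIhat hglobal
    θstar
end

section
/- (Theorem 3, minimizer equivalence for OLS) Let θ0 ∈ ℝ^d satisfy ‖Xθ0 − Y‖² ≤ ‖Xθ − Y‖² for all θ ∈ ℝ^d (θ0 is an OLS minimizer on (X,Y)), and set Y' = Xθ0 ∈ ℝⁿ (the predictions of θ0 on X). Then for every θ* ∈ ℝ^d: θ* minimizes θ ↦ ‖Xθ − Y‖² + ‖Xpθ − Yp‖² over ℝ^d if and only if θ* minimizes θ ↦ ‖Xθ − Y'‖² + ‖Xpθ − Yp‖² over ℝ^d. That is, training on the poisoned dataset (X,Y) ∪ (Xp,Yp) and on (X,Y') ∪ (Xp,Yp) yields the same set of OLS minimizers. -/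
/-!
Since `θ0` is a least-squares solution, the residual `Y - X θ0` is orthogonal to the column
space of `X`, so by Pythagoras `‖X θ - Y‖² = ‖X θ - X θ0‖² + ‖X θ0 - Y‖²` for every `θ`.
The two poisoned objectives thus differ by the constant `‖X θ0 - Y‖²` and have the same
minimizers.
-/

open Matrix RealInnerProductSpace

section LeastSquares

variable {F : Type*} [NormedAddCommGroup F] [InnerProductSpace ℝ F] {K : Submodule ℝ F}
  {y v₀ : F}

theorem Submodule.inner_sub_eq_zero_of_forall_norm_sub_le (hv₀ : v₀ ∈ K)
    (hmin : ∀ v ∈ K, ‖v₀ - y‖ ≤ ‖v - y‖) {w : F} (hw : w ∈ K) : ⟪y - v₀, w⟫ = 0 := by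
  refine (norm_eq_iInf_iff_real_inner_eq_zero K hv₀).1 (le_antisymm ?_ ?_) w hw
  · exact le_ciInf fun v ↦ by simpa only [norm_sub_rev y] using hmin v v.2
  · exact ciInf_le ⟨0, by rintro _ ⟨v, rfl⟩; positivity⟩ (⟨v₀, hv₀⟩ : K)

theorem Submodule.norm_sub_sq_eq_of_forall_norm_sub_le (hv₀ : v₀ ∈ K)
    (hmin : ∀ v ∈ K, ‖v₀ - y‖ ≤ ‖v - y‖) {v : F} (hv : v ∈ K) :
    ‖v - y‖ ^ 2 = ‖v - v₀‖ ^ 2 + ‖v₀ - y‖ ^ 2 := by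
  have horth : ⟪v - v₀, v₀ - y⟫ = 0 := by
    rw [real_inner_comm, ← neg_sub, inner_neg_left,
      inner_sub_eq_zero_of_forall_norm_sub_le hv₀ hmin (K.sub_mem hv hv₀), neg_zero]
  simpa only [sq, sub_add_sub_cancel] using norm_add_sq_eq_norm_sq_add_norm_sq_real horth

end LeastSquares

theorem EuclideanSpace.sum_sub_sq_eq_norm_toLp_sub_sq {ι : Type*} [Fintype ι] (v w : ι → ℝ) :
    ∑ i, (v i - w i) ^ 2 = ‖WithLp.toLp 2 v - WithLp.toLp 2 w‖ ^ 2 := by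
  simp [EuclideanSpace.real_norm_sq_eq]

theorem Matrix.sum_mulVec_sub_sq_eq_of_forall_sum_le {m k : Type*} [Fintype m] [Fintype k]
    {X : Matrix m k ℝ} {Y : m → ℝ} {θ₀ : k → ℝ}
    (hθ₀ : ∀ θ, ∑ i, ((X *ᵥ θ₀) i - Y i) ^ 2 ≤ ∑ i, ((X *ᵥ θ) i - Y i) ^ 2) (θ : k → ℝ) :
    ∑ i, ((X *ᵥ θ) i - Y i) ^ 2 =
      ∑ i, ((X *ᵥ θ) i - (X *ᵥ θ₀) i) ^ 2 + ∑ i, ((X *ᵥ θ₀) i - Y i) ^ 2 := by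
  let A := (WithLp.linearEquiv 2 ℝ (m → ℝ)).symm.toLinearMap ∘ₗ X.mulVecLin
  have hA (θ : k → ℝ) : A θ = WithLp.toLp 2 (X *ᵥ θ) := rfl
  simp only [EuclideanSpace.sum_sub_sq_eq_norm_toLp_sub_sq, ← hA] at hθ₀ ⊢
  refine (LinearMap.range A).norm_sub_sq_eq_of_forall_norm_sub_le ⟨θ₀, rfl⟩ ?_ ⟨θ, rfl⟩
  rintro _ ⟨θ, rfl⟩
  exact le_of_sq_le_sq (hθ₀ θ) (norm_nonneg _)

/-- Theorem 3 (minimizer equivalence for OLS): if `θ0` is an OLS minimizer on `(X, Y)`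
and `Y' = X θ0`, then the poisoned objectives built from `(X, Y)` and `(X, Y')`
have the same set of minimizers. -/
theorem poisoned_ols_minimizer_equivalence (n p d : ℕ)
    (X : Matrix (Fin n) (Fin d) ℝ) (Y : Fin n → ℝ)
    (Xp : Matrix (Fin p) (Fin d) ℝ) (Yp : Fin p → ℝ)
    (θ0 : Fin d → ℝ)
    (hθ0 : ∀ θ : Fin d → ℝ,
      ∑ i, (X.mulVec θ0 i - Y i) ^ 2 ≤ ∑ i, (X.mulVec θ i - Y i) ^ 2)
    (Y' : Fin n → ℝ) (hY' : Y' = X.mulVec θ0) :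
    ∀ θs : Fin d → ℝ,
      (∀ θ : Fin d → ℝ,
          (∑ i, (X.mulVec θs i - Y i) ^ 2) + ∑ j, (Xp.mulVec θs j - Yp j) ^ 2 ≤
            (∑ i, (X.mulVec θ i - Y i) ^ 2) + ∑ j, (Xp.mulVec θ j - Yp j) ^ 2) ↔
      (∀ θ : Fin d → ℝ,
          (∑ i, (X.mulVec θs i - Y' i) ^ 2) + ∑ j, (Xp.mulVec θs j - Yp j) ^ 2 ≤
            (∑ i, (X.mulVec θ i - Y' i) ^ 2) + ∑ j, (Xp.mulVec θ j - Yp j) ^ 2) := by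
  subst hY'
  intro θs
  have hsplit := Matrix.sum_mulVec_sub_sq_eq_of_forall_sum_le hθ0
  constructor <;> intro h θ <;> linarith [h θ, hsplit θs, hsplit θ]
end

section
/- (Gradient of W'_tr with respect to the poisoning response y_c) Let x_c ∈ ℝ^d, and suppose u ∈ ℝ^d and s ∈ ℝ satisfy the KKT-derived equations Σu + s·μ = (1/n)·x_c and ⟨μ,u⟩ + s = 1/n (so (u,s) is the derivative of the learned parameters (w,b) with respect to y_c). Then (2/n)·Σ_{i=1}^n (f(x_i,θ) − f(x_i,θ0))·(⟨x_i,u⟩ + s) = (2/n)·(f(x_c,θ) − f(x_c,θ0)). -/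
/-!
Write `v = w - w0`, `c = b - b0`, so that `f(z,θ) - f(z,θ0) = ⟨v,z⟩ + c`. Expanding,
`∑ᵢ (⟨v,xᵢ⟩ + c)(⟨xᵢ,u⟩ + s) = ⟨v, n(Σu + sμ)⟩ + c·n(⟨μ,u⟩ + s)`,
and the two KKT equations say exactly that `n(Σu + sμ) = x_c` and `n(⟨μ,u⟩ + s) = 1`.
-/

open Matrix

section
variable {ι κ R : Type*} [Fintype ι] [Fintype κ] [CommRing R]

theorem sum_vecMulVec_self_mulVec (x : ι → κ → R) (u : κ → R) :
    (∑ i, vecMulVec (x i) (x i)) *ᵥ u = ∑ i, (x i ⬝ᵥ u) • x i := by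
  simp only [sum_mulVec, vecMulVec_mulVec, op_smul_eq_smul]

theorem sum_affine_mul_affine (x : ι → κ → R) (v u : κ → R) (c s : R) :
    ∑ i, (v ⬝ᵥ x i + c) * (x i ⬝ᵥ u + s) =
      v ⬝ᵥ ((∑ i, vecMulVec (x i) (x i)) *ᵥ u + s • ∑ i, x i) +
        c * ((∑ i, x i) ⬝ᵥ u + Fintype.card ι • s) := by
  calc ∑ i, (v ⬝ᵥ x i + c) * (x i ⬝ᵥ u + s)
      = ∑ i, (v ⬝ᵥ ((x i ⬝ᵥ u) • x i + s • x i) + c * (x i ⬝ᵥ u + s)) := by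
        refine Finset.sum_congr rfl fun i _ => ?_
        simp only [dotProduct_add, dotProduct_smul, smul_eq_mul]
        ring
    _ = _ := by
        simp only [Finset.sum_add_distrib, ← dotProduct_sum, ← Finset.mul_sum, ← Finset.smul_sum,
          sum_dotProduct, Finset.sum_const, Finset.card_univ, sum_vecMulVec_self_mulVec]

end

theorem attack_gradient_response_general (d n : ℕ)
    (x : Fin n → Fin d → ℝ)
    (w w0 : Fin d → ℝ) (b b0 : ℝ)
    (Sig : Matrix (Fin d) (Fin d) ℝ)
    (hSig : Sig = (1 / (n : ℝ)) • ∑ i, Matrix.vecMulVec (x i) (x i))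
    (mu : Fin d → ℝ) (hmu : mu = (1 / (n : ℝ)) • ∑ i, x i)
    (xc : Fin d → ℝ) (u : Fin d → ℝ) (s : ℝ)
    (hu : Sig.mulVec u + s • mu = (1 / (n : ℝ)) • xc)
    (hs : (∑ j, mu j * u j) + s = 1 / (n : ℝ)) :
    (2 / (n : ℝ)) * ∑ i,
        (((∑ j, w j * x i j) + b) - ((∑ j, w0 j * x i j) + b0)) * ((∑ j, x i j * u j) + s) =
      (2 / (n : ℝ)) * (((∑ j, w j * xc j) + b) - ((∑ j, w0 j * xc j) + b0)) := by
  subst hSig hmu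
  -- for `n = 0` both sides are `2 / 0 * _ = 0`
  rcases eq_or_ne n 0 with rfl | hn
  · simp
  have hn' : (1 / (n : ℝ)) ≠ 0 := by positivity
  have hcov : (∑ i, vecMulVec (x i) (x i)) *ᵥ u + s • ∑ i, x i = xc := by
    rw [smul_mulVec, smul_comm, ← smul_add] at hu
    exact smul_right_injective _ hn' hu
  have hmean : (∑ i, x i) ⬝ᵥ u + Fintype.card (Fin n) • s = 1 := by
    change ((1 / (n : ℝ)) • ∑ i, x i) ⬝ᵥ u + s = 1 / n at hs
    rw [smul_dotProduct, smul_eq_mul] at hs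
    field_simp at hs
    rw [Fintype.card_fin, nsmul_eq_mul]
    linarith
  have hdiff (z : Fin d → ℝ) : (w ⬝ᵥ z + b) - (w0 ⬝ᵥ z + b0) = (w - w0) ⬝ᵥ z + (b - b0) := by
    rw [sub_dotProduct]
    ring
  change (2 / (n : ℝ)) * ∑ i, ((w ⬝ᵥ x i + b) - (w0 ⬝ᵥ x i + b0)) * (x i ⬝ᵥ u + s) =
    (2 / (n : ℝ)) * ((w ⬝ᵥ xc + b) - (w0 ⬝ᵥ xc + b0))
  simp only [hdiff, sum_affine_mul_affine, hcov, hmean, mul_one]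

/-- Gradient of `W'_tr` with respect to the poisoning response `y_c`: if `(u, s)` satisfies
the KKT-derived equations `Σu + sμ = (1/n)·x_c` and `⟨μ,u⟩ + s = 1/n`, then the directional
derivative equals `(2/n)(f(x_c,θ) − f(x_c,θ0))`. -/
theorem attack_gradient_response (d n : ℕ) (hn : 1 ≤ n)
    (x : Fin n → Fin d → ℝ)
    (w w0 : Fin d → ℝ) (b b0 : ℝ)
    (Sig : Matrix (Fin d) (Fin d) ℝ)
    (hSig : Sig = (1 / (n : ℝ)) • ∑ i, Matrix.vecMulVec (x i) (x i))
    (mu : Fin d → ℝ) (hmu : mu = (1 / (n : ℝ)) • ∑ i, x i)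
    (xc : Fin d → ℝ) (u : Fin d → ℝ) (s : ℝ)
    (hu : Sig.mulVec u + s • mu = (1 / (n : ℝ)) • xc)
    (hs : (∑ j, mu j * u j) + s = 1 / (n : ℝ)) :
    (2 / (n : ℝ)) * ∑ i,
        (((∑ j, w j * x i j) + b) - ((∑ j, w0 j * x i j) + b0)) * ((∑ j, x i j * u j) + s) =
      (2 / (n : ℝ)) * (((∑ j, w j * xc j) + b) - ((∑ j, w0 j * xc j) + b0)) :=
  attack_gradient_response_general d n x w w0 b b0 Sig hSig mu hmu xc u s hu hs
end

section
/- (Gradient of W'_tr with respect to a coordinate of the poisoning point x_c) Let x_c ∈ ℝ^d, y_c ∈ ℝ, let k ∈ {1,…,d}, let e_k denote the k-th standard basis vector of ℝ^d and w_k the k-th coordinate of w. Suppose u ∈ ℝ^d and s ∈ ℝ satisfy the KKT-derived equations Σu + s·μ = −(1/n)·(w_k·x_c + (f(x_c,θ) − y_c)·e_k) and ⟨μ,u⟩ + s = −(1/n)·w_k (so (u,s) is the derivative of the learned parameters (w,b) with respect to the k-th coordinate of x_c). Then (2/n)·Σ_{i=1}^n (f(x_i,θ) − f(x_i,θ0))·(⟨x_i,u⟩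 + s) = (2/n)·(⟨w0 − w, w_k·x_c + (f(x_c,θ) − y_c)·e_k⟩ + (b0 − b)·w_k). -/
open Matrix Finset

/-!
Write `r i = ⟨x i, u⟩ + s` for the first-order change of the prediction at `x i`. The two
KKT-derived equations are, after multiplying by `n`, the moment identities
`∑ i, r i • x i = -c` and `∑ i, r i = -w k`, where `c = w_k x_c + (f(x_c,θ) − y_c) e_k`.
The attacker's gradient is linear in `r` with coefficients `f(x i,θ) − f(x i,θ0)`, an affine
function of `x i`, so it only sees these two moments.
-/

section Moments

variable {ι m R : Type*} [Fintype ι] [Fintype m] [CommRing R]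

theorem sum_vecMulVec_mulVec_add_smul_sum (x : ι → m → R) (u : m → R) (s : R) :
    (∑ i, vecMulVec (x i) (x i)) *ᵥ u + s • ∑ i, x i = ∑ i, (x i ⬝ᵥ u + s) • x i := by
  simp only [sum_mulVec, vecMulVec_mulVec, op_smul_eq_smul, smul_sum, ← sum_add_distrib,
    add_smul]

theorem sum_dotProduct_add_card_smul (x : ι → m → R) (u : m → R) (s : R) :
    (∑ i, x i) ⬝ᵥ u + Fintype.card ι • s = ∑ i, (x i ⬝ᵥ u + s) := by
  rw [sum_dotProduct, sum_add_distrib, sum_const, card_univ]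

theorem sum_dotProduct_add_mul (x : ι → m → R) (v : m → R) (a : R) (r : ι → R) :
    ∑ i, (v ⬝ᵥ x i + a) * r i = v ⬝ᵥ ∑ i, r i • x i + a * ∑ i, r i := by
  simp only [dotProduct_sum, dotProduct_smul, smul_eq_mul, mul_sum, ← sum_add_distrib]
  exact sum_congr rfl fun i _ => by ring

end Moments

/-- Gradient of `W'_tr` with respect to the `k`-th coordinate of the poisoning point `x_c`:
if `(u, s)` satisfies the KKT-derived equations
`Σu + sμ = −(1/n)(w_k x_c + (f(x_c,θ) − y_c) e_k)` and `⟨μ,u⟩ + s = −(1/n) w_k`, then the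
directional derivative equals
`(2/n)(⟨w0 − w, w_k x_c + (f(x_c,θ) − y_c) e_k⟩ + (b0 − b) w_k)`. -/
theorem attack_gradient_feature (d n : ℕ) (hn : 1 ≤ n)
    (x : Fin n → Fin d → ℝ)
    (w w0 : Fin d → ℝ) (b b0 : ℝ)
    (Sig : Matrix (Fin d) (Fin d) ℝ)
    (hSig : Sig = (1 / (n : ℝ)) • ∑ i, Matrix.vecMulVec (x i) (x i))
    (mu : Fin d → ℝ) (hmu : mu = (1 / (n : ℝ)) • ∑ i, x i)
    (xc : Fin d → ℝ) (yc : ℝ) (k : Fin d)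
    (u : Fin d → ℝ) (s : ℝ)
    (hu : Sig.mulVec u + s • mu =
      -((1 / (n : ℝ)) • (w k • xc + (((∑ j, w j * xc j) + b) - yc) • (Pi.single k (1 : ℝ) : Fin d → ℝ))))
    (hs : (∑ j, mu j * u j) + s = -((1 / (n : ℝ)) * w k)) :
    (2 / (n : ℝ)) * ∑ i,
        (((∑ j, w j * x i j) + b) - ((∑ j, w0 j * x i j) + b0)) * ((∑ j, x i j * u j) + s) =
      (2 / (n : ℝ)) *
        ((∑ j, (w0 j - w j) *
            (w k • xc + (((∑ j', w j' * xc j') + b) - yc) • (Pi.single k (1 : ℝ) : Fin d → ℝ)) j)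
          + (b0 - b) * w k) := by
  set c : Fin d → ℝ := w k • xc + (w ⬝ᵥ xc + b - yc) • Pi.single k 1
  have hn₀ : (n : ℝ) ≠ 0 := Nat.cast_ne_zero.mpr (by omega)
  have hinv : (1 / (n : ℝ)) ≠ 0 := one_div_ne_zero hn₀
  have hxr : ∑ i, (x i ⬝ᵥ u + s) • x i = -c := by
    refine smul_right_injective _ hinv ?_
    dsimp only
    rw [← sum_vecMulVec_mulVec_add_smul_sum, smul_add, ← smul_mulVec, smul_comm, ← hSig, ← hmu,
      smul_neg]
    exact hu
  have hr : ∑ i, (x i ⬝ᵥ u + s) = -w k := by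
    refine mul_left_cancel₀ hinv ?_
    rw [← sum_dotProduct_add_card_smul, Fintype.card_fin, nsmul_eq_mul, mul_add, ← mul_assoc,
      one_div_mul_cancel hn₀, one_mul, ← smul_eq_mul (1 / (n : ℝ)), ← smul_dotProduct, ← hmu,
      mul_neg]
    exact hs
  have hdiff : ∀ i, (w ⬝ᵥ x i + b) - (w0 ⬝ᵥ x i + b0) = (w - w0) ⬝ᵥ x i + (b - b0) := fun i => by
    rw [sub_dotProduct]; ring
  change 2 / (n : ℝ) * ∑ i, ((w ⬝ᵥ x i + b) - (w0 ⬝ᵥ x i + b0)) * (x i ⬝ᵥ u + s) =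
    2 / (n : ℝ) * ((w0 - w) ⬝ᵥ c + (b0 - b) * w k)
  simp only [hdiff, sum_dotProduct_add_mul]
  rw [hxr, hr, dotProduct_neg, ← neg_dotProduct, neg_sub]
  ring
end

section
/- (Closed form of the x_c-gradient of W'_tr) In the setting of the previous statement, assume additionally that the poisoning response lies on the original regression hyperplane, i.e. y_c = f(x_c, θ0). Then the expression simplifies to (2/n)·Σ_{i=1}^n (f(x_i,θ) − f(x_i,θ0))·(⟨x_i,u⟩ + s) = (2/n)·(f(x_c,θ) − f(x_c,θ0))·(w0 − 2w)_k, where (w0 − 2w)_k denotes the k-th coordinate of the vector w0 − 2w. -/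
open Matrix

/-!
With `v = w - w0` and `c = b - b0` the residuals are `f(x_i,θ) - f(x_i,θ0) = ⟨v, x_i⟩ + c`, and
expanding the sum gives `(1/n) Σ_i (⟨v, x_i⟩ + c)(⟨x_i, u⟩ + s) = ⟨v, Σu + sμ⟩ + c (⟨μ, u⟩ + s)`:
the pairing of `(v, c)` with the left-hand sides of the two linear equations defining `(u, s)`.
Substituting their right-hand sides and `y_c = f(x_c, θ0)` leaves
`-(1/n) (f(x_c,θ) - f(x_c,θ0)) (2 w_k - w0_k)`.
-/

section EmpiricalMoments

variable {K ι m : Type*} [Fintype ι]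

def empiricalMean [Field K] (x : ι → m → K) : m → K :=
  (Fintype.card ι : K)⁻¹ • ∑ i, x i

def empiricalSecondMoment [Field K] (x : ι → m → K) : Matrix m m K :=
  (Fintype.card ι : K)⁻¹ • ∑ i, vecMulVec (x i) (x i)

variable [Fintype m]

theorem sum_dotProduct_mul_dotProduct [CommSemiring K] (x : ι → m → K) (v u : m → K) :
    ∑ i, (v ⬝ᵥ x i) * (x i ⬝ᵥ u) = v ⬝ᵥ ((∑ i, vecMulVec (x i) (x i)) *ᵥ u) := by
  simp only [sum_mulVec, dotProduct_sum, vecMulVec_mulVec, op_smul_eq_smul, dotProduct_smul,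
    smul_eq_mul, mul_comm]

theorem sum_affine_mul_affine_eq [Field K] (x : ι → m → K) (v u : m → K) (c s : K)
    (hcard : (Fintype.card ι : K) ≠ 0) :
    ∑ i, (v ⬝ᵥ x i + c) * (x i ⬝ᵥ u + s) =
      Fintype.card ι * (v ⬝ᵥ (empiricalSecondMoment x *ᵥ u + s • empiricalMean x)
        + c * (empiricalMean x ⬝ᵥ u + s)) := by
  simp only [empiricalSecondMoment, empiricalMean, smul_mulVec, dotProduct_add, dotProduct_smul,
    smul_dotProduct, ← sum_dotProduct_mul_dotProduct, dotProduct_sum, sum_dotProduct, smul_eq_mul,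
    add_mul, mul_add, Finset.sum_add_distrib, ← Finset.sum_mul, ← Finset.mul_sum,
    Finset.sum_const, Finset.card_univ, nsmul_eq_mul]
  field_simp
  ring

end EmpiricalMoments

/-- Closed form of the `x_c`-gradient of `W'_tr`: if in addition `y_c = f(x_c, θ0)` lies on
the original regression hyperplane, the directional derivative simplifies to
`(2/n)(f(x_c,θ) − f(x_c,θ0))·(w0 − 2w)_k`. -/
theorem attack_gradient_feature_closed_form (d n : ℕ) (hn : 1 ≤ n)
    (x : Fin n → Fin d → ℝ)
    (w w0 : Fin d → ℝ) (b b0 : ℝ)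
    (Sig : Matrix (Fin d) (Fin d) ℝ)
    (hSig : Sig = (1 / (n : ℝ)) • ∑ i, Matrix.vecMulVec (x i) (x i))
    (mu : Fin d → ℝ) (hmu : mu = (1 / (n : ℝ)) • ∑ i, x i)
    (xc : Fin d → ℝ) (yc : ℝ) (k : Fin d)
    (u : Fin d → ℝ) (s : ℝ)
    (hu : Sig.mulVec u + s • mu =
      -((1 / (n : ℝ)) • (w k • xc + (((∑ j, w j * xc j) + b) - yc) • (Pi.single k (1 : ℝ) : Fin d → ℝ))))
    (hs : (∑ j, mu j * u j) + s = -((1 / (n : ℝ)) * w k))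
    (hyc : yc = (∑ j, w0 j * xc j) + b0) :
    (2 / (n : ℝ)) * ∑ i,
        (((∑ j, w j * x i j) + b) - ((∑ j, w0 j * x i j) + b0)) * ((∑ j, x i j * u j) + s) =
      (2 / (n : ℝ)) * (((∑ j, w j * xc j) + b) - ((∑ j, w0 j * xc j) + b0))
        * (w0 k - 2 * w k) := by
  have hcard : (Fintype.card (Fin n) : ℝ) ≠ 0 := by simp; omega
  have hSig' : Sig = empiricalSecondMoment x := by
    rw [hSig, empiricalSecondMoment, Fintype.card_fin, one_div]
  have hmu' : mu = empiricalMean x := by rw [hmu, empiricalMean, Fintype.card_fin, one_div]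
  have hresidual (z : Fin d → ℝ) : (w ⬝ᵥ z + b) - (w0 ⬝ᵥ z + b0) = (w - w0) ⬝ᵥ z + (b - b0) := by
    rw [sub_dotProduct]; ring
  subst hyc
  change mu ⬝ᵥ u + s = _ at hs
  change _ = -((1 / (n : ℝ)) •
    (w k • xc + ((w ⬝ᵥ xc + b) - (w0 ⬝ᵥ xc + b0)) • Pi.single k 1)) at hu
  change (2 / (n : ℝ)) * ∑ i, ((w ⬝ᵥ x i + b) - (w0 ⬝ᵥ x i + b0)) * (x i ⬝ᵥ u + s) =
    2 / n * ((w ⬝ᵥ xc + b) - (w0 ⬝ᵥ xc + b0)) * (w0 k - 2 * w k)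
  simp_rw [hresidual] at hu ⊢
  rw [sum_affine_mul_affine_eq x _ u _ s hcard, ← hSig', ← hmu', hu, hs]
  simp only [dotProduct_neg, dotProduct_smul, dotProduct_add, dotProduct_single_one,
    Fintype.card_fin, Pi.sub_apply, smul_eq_mul]
  field_simp
  ring
end
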